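/- Let G be a connected graph with 2r vertices such that every maximal matching of G has size r. Then G is isomorphic to the complete graph K_{2r} or to the complete bipartite graph K_{r,r}. -/

import Mathlib

/-!
Call `G` randomly matchable when every maximal matching covers all vertices. The engine is an
exchange argument: if `ab` and `cd` are disjoint edges and `ac` is an edge, extend `{ab, cd}` to a
perfect matching and trade `ab, cd` for `ac`. The resulting matching leaves only `b` and `d`
uncovered, so any maximal matching containing it must use the edge `bd`.

With connectivity this shows that every vertex outside an edge `xy` is adjacent to `x` or `y`, so
two non-adjacent vertices have the same neighbours. If `G` is not complete, take non-adjacent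
`a ≠ b`. The neighbourhood `N(a)` is independent, since an edge `yz` in it would give `ab` by
exchange. So `G` is complete bipartite with parts `N(a)` and its complement, and a perfect
matching forces the parts to have equal size.
-/

open SimpleGraph

/-- A matching of a simple graph, given as a set of edges: each edge belongs to the
graph, and distinct edges of the matching share no vertex. -/
def EdgeMatching {V : Type*} (G : SimpleGraph V) (M : Set (Sym2 V)) : Prop :=
  M ⊆ G.edgeSet ∧ ∀ e ∈ M, ∀ f ∈ M, e ≠ f → ∀ v : V, v ∈ e → v ∉ f

/-- The set of vertices covered by a set of edges. -/
def mCover {V : Type*} (M : Set (Sym2 V)) : Set V := {v | ∃ e ∈ M, v ∈ e}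

/-- A maximal matching: a matching to which no edge of the graph can be added. -/
def MaximalEdgeMatching {V : Type*} (G : SimpleGraph V) (M : Set (Sym2 V)) : Prop :=
  EdgeMatching G M ∧ ∀ e ∈ G.edgeSet, EdgeMatching G (insert e M) → e ∈ M

section

variable {V : Type*} {G : SimpleGraph V} {M N : Set (Sym2 V)} {e f : Sym2 V}

theorem mCover_insert (e : Sym2 V) (M : Set (Sym2 V)) :
    mCover (insert e M) = {v | v ∈ e} ∪ mCover M := by
  ext v
  simp [mCover]

theorem ncard_setOf_mem_of_mem_edgeSet (he : e ∈ G.edgeSet) : {v | v ∈ e}.ncard = 2 := by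
  induction e using Sym2.ind with
  | _ a b =>
    rw [show {v | v ∈ s(a, b)} = {a, b} by ext; simp]
    exact Set.ncard_pair (G.mem_edgeSet.mp he).ne

namespace EdgeMatching

theorem empty : EdgeMatching G ∅ :=
  ⟨Set.empty_subset _, by simp⟩

theorem mono (hM : EdgeMatching G M) (h : N ⊆ M) : EdgeMatching G N :=
  ⟨h.trans hM.1, fun e he f hf => hM.2 e (h he) f (h hf)⟩

theorem eq_of_mem (hM : EdgeMatching G M) (he : e ∈ M) (hf : f ∈ M) {v : V} (hve : v ∈ e)
    (hvf : v ∈ f) : e = f :=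
  by_contra fun hef => hM.2 e he f hf hef v hve hvf

theorem insert_of_forall_notMem_mCover (hM : EdgeMatching G M) (he : e ∈ G.edgeSet)
    (hfree : ∀ v ∈ e, v ∉ mCover M) : EdgeMatching G (insert e M) := by
  refine ⟨Set.insert_subset he hM.1, ?_⟩
  rintro e' (rfl | he') f' (rfl | hf') hef v hve hvf
  · exact hef rfl
  · exact hfree v hve ⟨f', hf', hvf⟩
  · exact hfree v hvf ⟨e', he', hve⟩
  · exact hM.2 e' he' f' hf' hef v hve hvf

theorem ncard_mCover [Finite V] (hM : EdgeMatching G M) : (mCover M).ncard = 2 * M.ncard := by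
  induction M, M.toFinite using Set.Finite.induction_on with
  | empty => simp [mCover]
  | @insert e s he _ ih =>
    have hdisj : Disjoint {v | v ∈ e} (mCover s) :=
      Set.disjoint_left.2 fun v hve ⟨f, hf, hvf⟩ =>
        he (hM.eq_of_mem (Set.mem_insert e s) (Set.mem_insert_of_mem e hf) hve hvf ▸ hf)
    rw [mCover_insert, Set.ncard_union_eq hdisj,
      ncard_setOf_mem_of_mem_edgeSet (hM.1 (Set.mem_insert e s)),
      ih (hM.mono (Set.subset_insert e s)), Set.ncard_insert_of_notMem he]
    ring

theorem mCover_eq_univ_of_two_mul_ncard [Finite V] (hM : EdgeMatching G M)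
    (h : 2 * M.ncard = Nat.card V) : mCover M = Set.univ :=
  Set.eq_of_subset_of_ncard_le (Set.subset_univ _) (by rw [hM.ncard_mCover, h, Set.ncard_univ])

theorem exists_maximal_superset [Finite V] (hM : EdgeMatching G M) :
    ∃ N, MaximalEdgeMatching G N ∧ M ⊆ N := by
  obtain ⟨N, hMN, hN⟩ := Finite.exists_le_maximal (p := EdgeMatching G) hM
  exact ⟨N, ⟨hN.prop, fun _ _ he => hN.mem_of_prop_insert he⟩, hMN⟩

theorem ncard_le_ncard_compl [Finite V] {B : Set V} (hB : ∀ v w, G.Adj v w → (v ∈ B ↔ w ∉ B))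
    (hM : EdgeMatching G M) (hcov : mCover M = Set.univ) : B.ncard ≤ Bᶜ.ncard := by
  have hpartner : ∀ v, ∃ w, s(v, w) ∈ M := fun v => by
    obtain ⟨e, he, hve⟩ : v ∈ mCover M := hcov ▸ Set.mem_univ v
    obtain ⟨w, rfl⟩ := Sym2.mem_iff_exists.1 hve
    exact ⟨w, he⟩
  choose partner hpartner using hpartner
  refine Set.ncard_le_ncard_of_injOn partner
    (fun v hv => (hB v _ (hM.1 (hpartner v))).1 hv) fun v _ v' _ h => ?_
  have hedge : s(v, partner v) = s(v', partner v') :=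
    hM.eq_of_mem (hpartner v) (hpartner v') (Sym2.mem_mk_right _ _) (h ▸ Sym2.mem_mk_right _ _)
  rw [h] at hedge
  exact Sym2.congr_left.1 hedge

theorem ncard_eq_ncard_compl [Finite V] {B : Set V} (hB : ∀ v w, G.Adj v w ↔ (v ∈ B ↔ w ∉ B))
    (hM : EdgeMatching G M) (hcov : mCover M = Set.univ) : B.ncard = Bᶜ.ncard := by
  refine le_antisymm (hM.ncard_le_ncard_compl (fun v w => (hB v w).1) hcov) ?_
  simpa using hM.ncard_le_ncard_compl (B := Bᶜ) (fun v w h => by simp [(hB v w).1 h]) hcov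

end EdgeMatching

def completeBipartiteGraphIsoOfAdjIff (B : Set V) [DecidablePred (· ∈ B)]
    (hB : ∀ v w, G.Adj v w ↔ (v ∈ B ↔ w ∉ B)) : completeBipartiteGraph B ↥Bᶜ ≃g G where
  toEquiv := Equiv.Set.sumCompl B
  map_rel_iff' := by
    rintro (⟨v, hv⟩ | ⟨v, hv : v ∉ B⟩) (⟨w, hw⟩ | ⟨w, hw : w ∉ B⟩) <;> simp [hB, hv, hw]

def RandomlyMatchable (G : SimpleGraph V) : Prop :=
  ∀ M, MaximalEdgeMatching G M → mCover M = Set.univ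

namespace RandomlyMatchable

variable [Finite V]

theorem exists_perfect_superset (hG : RandomlyMatchable G) (hM : EdgeMatching G M) :
    ∃ N, EdgeMatching G N ∧ M ⊆ N ∧ mCover N = Set.univ :=
  let ⟨N, hN, hMN⟩ := hM.exists_maximal_superset
  ⟨N, hN.1, hMN, hG N hN⟩

theorem adj_of_forall_mem_mCover (hG : RandomlyMatchable G) (hM : EdgeMatching G M) {p q : V}
    (hp : p ∉ mCover M) (hcov : ∀ v, v ≠ p → v ≠ q → v ∈ mCover M) : G.Adj p q := by
  obtain ⟨N, hN, hMN, hNcov⟩ := hG.exists_perfect_superset hM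
  obtain ⟨e, heN, hpe⟩ : p ∈ mCover N := hNcov ▸ Set.mem_univ p
  have hfree : ∀ v ∈ e, v ∉ mCover M := fun v hve ⟨f, hf, hvf⟩ =>
    hp ⟨f, hf, hN.eq_of_mem heN (hMN hf) hve hvf ▸ hpe⟩
  obtain ⟨w, rfl⟩ := Sym2.mem_iff_exists.1 hpe
  have hpw : G.Adj p w := hN.1 heN
  by_contra hpq
  exact hfree w (Sym2.mem_mk_right p w) (hcov w hpw.ne' fun hwq => hpq (hwq ▸ hpw))

theorem adj_of_adj_of_adj_of_adj (hG : RandomlyMatchable G) {a b c d : V} (hab : G.Adj a b)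
    (hcd : G.Adj c d) (hac : G.Adj a c) (had : a ≠ d) (hbc : b ≠ c) (hbd : b ≠ d) :
    G.Adj b d := by
  have hpair : EdgeMatching G {s(a, b), s(c, d)} := by
    refine ⟨by rintro e (rfl | rfl) <;> assumption, ?_⟩
    have hdisj : ∀ v ∈ s(a, b), v ∉ s(c, d) := by
      simp only [Sym2.mem_iff]
      rintro v (rfl | rfl) (rfl | rfl) <;> first | exact hac.ne rfl | contradiction
    rintro e (rfl | rfl) f (rfl | rfl) hef v hve hvf <;>
      first | exact hef rfl | exact hdisj v hve hvf | exact hdisj v hvf hve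
  obtain ⟨M, hM, hsub, hcov⟩ := hG.exists_perfect_superset hpair
  have hmem_ab : s(a, b) ∈ M := hsub (by simp)
  have hmem_cd : s(c, d) ∈ M := hsub (by simp)
  have hM' : EdgeMatching G (insert s(a, c) (M \ {s(a, b), s(c, d)})) := by
    refine (hM.mono Set.sdiff_subset).insert_of_forall_notMem_mCover hac ?_
    rintro v hv ⟨f, ⟨hf, hfne⟩, hvf⟩
    apply hfne
    rcases Sym2.mem_iff.1 hv with rfl | rfl
    · exact Or.inl (hM.eq_of_mem hf hmem_ab hvf (Sym2.mem_mk_left _ _))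
    · exact Or.inr (hM.eq_of_mem hf hmem_cd hvf (Sym2.mem_mk_left _ _))
  refine hG.adj_of_forall_mem_mCover hM' ?_ fun v hvb hvd => ?_
  · rintro ⟨f, rfl | ⟨hf, hfne⟩, hbf⟩
    · rcases Sym2.mem_iff.1 hbf with h | h
      exacts [hab.ne h.symm, hbc h]
    · exact hfne (Or.inl (hM.eq_of_mem hf hmem_ab hbf (Sym2.mem_mk_right _ _)))
  · by_cases hv : v = a ∨ v = c
    · exact ⟨s(a, c), Set.mem_insert _ _, Sym2.mem_iff.2 hv⟩
    · obtain ⟨f, hf, hvf⟩ : v ∈ mCover M := hcov ▸ Set.mem_univ v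
      refine ⟨f, Set.mem_insert_of_mem _ ⟨hf, ?_⟩, hvf⟩
      rintro (rfl | rfl) <;> simp_all

theorem adj_or_adj_of_adj (hG : RandomlyMatchable G) (hconn : G.Connected) {x y u : V}
    (hxy : G.Adj x y) (hux : u ≠ x) (huy : u ≠ y) : G.Adj u x ∨ G.Adj u y := by
  by_contra! hu
  let U : Set V := {v | v ≠ x ∧ v ≠ y ∧ ¬G.Adj v x ∧ ¬G.Adj v y}
  have hclosed : ∀ v w, G.Adj v w → v ∈ U → w ∈ U := by
    rintro v w hvw ⟨hvx, hvy, hnvx, hnvy⟩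
    have hwx : w ≠ x := fun h => hnvx (h ▸ hvw)
    have hwy : w ≠ y := fun h => hnvy (h ▸ hvw)
    refine ⟨hwx, hwy, fun hadj => hnvy ?_, fun hadj => hnvx ?_⟩
    · exact (hG.adj_of_adj_of_adj_of_adj hxy hvw.symm hadj.symm hvx.symm hwy.symm hvy.symm).symm
    · exact (hG.adj_of_adj_of_adj_of_adj hxy.symm hvw.symm hadj.symm hvy.symm hwx.symm
        hvx.symm).symm
  have hwalk : ∀ {v w : V}, G.Walk v w → v ∈ U → w ∈ U := by
    intro v w p
    induction p with
    | nil => exact id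
    | cons h _ ih => exact fun hv => ih (hclosed _ _ h hv)
  exact (hwalk (hconn.preconnected u x).some ⟨hux, huy, hu.1, hu.2⟩).1 rfl

theorem adj_of_adj_of_not_adj (hG : RandomlyMatchable G) (hconn : G.Connected) {p q t : V}
    (hpq : p ≠ q) (hnpq : ¬G.Adj p q) (hpt : G.Adj p t) : G.Adj q t :=
  (hG.adj_or_adj_of_adj hconn hpt hpq.symm fun hqt => hnpq (hqt ▸ hpt)).resolve_left
    fun h => hnpq h.symm

theorem adj_iff_of_not_adj (hG : RandomlyMatchable G) (hconn : G.Connected) {a b : V}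
    (hab : a ≠ b) (hnab : ¬G.Adj a b) (v w : V) :
    G.Adj v w ↔ (v ∈ G.neighborSet a ↔ w ∉ G.neighborSet a) := by
  have hindep : ∀ y z, G.Adj a y → G.Adj a z → ¬G.Adj y z := fun y z hay haz hyz =>
    hnab (hG.adj_of_adj_of_adj_of_adj hay.symm (hG.adj_of_adj_of_not_adj hconn hab hnab haz).symm
      hyz (hG.adj_of_adj_of_not_adj hconn hab hnab hay).ne' haz.ne hab)
  have hout : ∀ v, ¬G.Adj a v → ∀ w, (G.Adj v w ↔ G.Adj a w) := by
    intro v hav w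
    rcases eq_or_ne a v with rfl | hav'
    · rfl
    · exact ⟨hG.adj_of_adj_of_not_adj hconn hav'.symm fun h => hav h.symm,
        hG.adj_of_adj_of_not_adj hconn hav' hav⟩
  simp only [mem_neighborSet]
  by_cases hv : G.Adj a v
  · simp only [hv, true_iff]
    exact ⟨fun hvw haw => hindep v w hv haw hvw, fun haw => ((hout w haw v).2 hv).symm⟩
  · simp only [hv, false_iff, not_not]
    exact hout v hv w

end RandomlyMatchable

end

theorem complete_or_completeBipartite_of_all_maximal_matchings_perfect_general {V : Type*}
    [Fintype V] (G : SimpleGraph V) (r : ℕ)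
    (hcard : Fintype.card V = 2 * r) (hconn : G.Connected)
    (hmax : ∀ M : Set (Sym2 V), MaximalEdgeMatching G M → M.ncard = r) :
    Nonempty (G ≃g (⊤ : SimpleGraph (Fin (2 * r)))) ∨
      Nonempty (G ≃g completeBipartiteGraph (Fin r) (Fin r)) := by
  classical
  have hG : RandomlyMatchable G := fun M hM =>
    hM.1.mCover_eq_univ_of_two_mul_ncard (by rw [hmax M hM, Nat.card_eq_fintype_card, hcard])
  by_cases htop : G = ⊤
  · subst htop
    exact Or.inl ⟨Iso.completeGraph (Fintype.equivFinOfCardEq hcard)⟩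
  obtain ⟨a, b, hab, hnab⟩ : ∃ a b, a ≠ b ∧ ¬G.Adj a b := by
    by_contra! h
    exact htop (eq_top_iff.2 fun v w hvw => h v w hvw)
  set B := G.neighborSet a
  have hB : ∀ v w, G.Adj v w ↔ (v ∈ B ↔ w ∉ B) := hG.adj_iff_of_not_adj hconn hab hnab
  obtain ⟨M, hM, -, hcov⟩ := hG.exists_perfect_superset EdgeMatching.empty
  have hparts := hM.ncard_eq_ncard_compl hB hcov
  have hsum : B.ncard + Bᶜ.ncard = 2 * r := by
    rw [Set.ncard_add_ncard_compl, Nat.card_eq_fintype_card, hcard]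
  refine Or.inr ⟨(completeBipartiteGraphIsoOfAdjIff B hB).symm.trans
    (completeBipartiteGraphCongr (Finite.equivFinOfCardEq ?_)
      (Finite.equivFinOfCardEq ?_))⟩ <;>
  · rw [Nat.card_coe_set_eq]
    omega

/-- a connected graph on 2r vertices in which every maximal matching has
size r is isomorphic to K_{2r} or to K_{r,r}. -/
theorem complete_or_completeBipartite_of_all_maximal_matchings_perfect {V : Type*}
    [Fintype V] (G : SimpleGraph V) (r : ℕ) (hr : 1 ≤ r)
    (hcard : Fintype.card V = 2 * r) (hconn : G.Connected)
    (hmax : ∀ M : Set (Sym2 V), MaximalEdgeMatching G M → M.ncard = r) :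
    Nonempty (G ≃g (⊤ : SimpleGraph (Fin (2 * r)))) ∨
      Nonempty (G ≃g completeBipartiteGraph (Fin r) (Fin r)) :=
  complete_or_completeBipartite_of_all_maximal_matchings_perfect_general G r hcard hconn hmax
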